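/- Let b ∈ H^σ(Tⁿ) and suppose m_k < 0 for k ≠ 0 with |m_k| ≥ C₁ > 0 (for β ≤ n) or |m_k| ≥ C₂‖k‖^{β−n} (for β > n) for large ‖k‖. Then for every t ≥ 0, the distribution U(t) = b̂₀ t²/2 + ∑_{0≠k∈ℤⁿ} (b̂_k/m_k)[cos(√(−m_k) t) − 1] e^{ik·x} belongs to H^s(Tⁿ) where s = σ + max{0, β−n}. -/
import Mathlib


open Real Filter

/-- Euclidean norm of a lattice point `k ∈ ℤⁿ`. -/
noncomputable def knrm (n : ℕ) (k : Fin n → ℤ) : ℝ :=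
  Real.sqrt (∑ i, ((k i : ℝ)) ^ 2)

/-- Fourier coefficient of the solution of the nonlocal wave equation with
forcing term `b`, zero initial data, and multipliers `m`. -/
noncomputable def forcedCoef (n : ℕ) (m : (Fin n → ℤ) → ℝ)
    (bh : (Fin n → ℤ) → ℂ) (t : ℝ) (k : Fin n → ℤ) : ℂ :=
  if k = 0 then bh 0 * ((t ^ 2 / 2 : ℝ) : ℂ)
  else (bh k / ((m k : ℝ) : ℂ)) * ((Real.cos (Real.sqrt (-m k) * t) - 1 : ℝ) : ℂ)

lemma knrm_nonneg (n : ℕ) (k : Fin n → ℤ) : 0 ≤ knrm n k := Real.sqrt_nonneg _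

lemma abs_le_knrm (n : ℕ) (k : Fin n → ℤ) (i : Fin n) : |(k i : ℝ)| ≤ knrm n k := by
  rw [← Real.sqrt_sq_eq_abs]
  apply Real.sqrt_le_sqrt
  exact Finset.single_le_sum (f := fun j => ((k j : ℝ))^2) (fun j _ => sq_nonneg _) (Finset.mem_univ i)

lemma knrm_zero (n : ℕ) : knrm n 0 = 0 := by simp [knrm]

lemma knrm_lt_finite (n : ℕ) (R : ℝ) : {k : Fin n → ℤ | knrm n k < R}.Finite := by
  apply (Set.finite_Icc (fun _ : Fin n => -⌈R⌉) (fun _ => ⌈R⌉)).subset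
  intro k hk
  simp only [Set.mem_setOf_eq] at hk
  constructor <;> intro i
  · have h := abs_le_knrm n k i
    have : -((⌈R⌉ : ℝ)) ≤ (k i : ℝ) := by
      have := Int.le_ceil R
      nlinarith [abs_nonneg ((k i : ℝ)), neg_abs_le ((k i : ℝ))]
    exact_mod_cast this
  · have h := abs_le_knrm n k i
    have : (k i : ℝ) ≤ (⌈R⌉ : ℝ) := by
      have := Int.le_ceil R
      nlinarith [le_abs_self ((k i : ℝ))]
    exact_mod_cast this

lemma forcedCoef_norm_le (n : ℕ) (m : (Fin n → ℤ) → ℝ) (bh : (Fin n → ℤ) → ℂ)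
    (t : ℝ) (k : Fin n → ℤ) (hk : k ≠ 0) :
    ‖forcedCoef n m bh t k‖ ≤ 2 * ‖bh k‖ / |m k| := by
  rw [forcedCoef, if_neg hk, norm_mul, norm_div]
  have h1 : ‖((m k : ℝ) : ℂ)‖ = |m k| := by
    rw [Complex.norm_real, Real.norm_eq_abs]
  have h2 : ‖((Real.cos (Real.sqrt (-m k) * t) - 1 : ℝ) : ℂ)‖ ≤ 2 := by
    rw [Complex.norm_real, Real.norm_eq_abs, abs_le]
    constructor
    · nlinarith [Real.neg_one_le_cos (Real.sqrt (-m k) * t)]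
    · nlinarith [Real.cos_le_one (Real.sqrt (-m k) * t)]
  rw [h1]
  calc ‖bh k‖ / |m k| * ‖((Real.cos (Real.sqrt (-m k) * t) - 1 : ℝ) : ℂ)‖
      ≤ ‖bh k‖ / |m k| * 2 := by
        apply mul_le_mul_of_nonneg_left h2 (by positivity)
    _ = 2 * ‖bh k‖ / |m k| := by ring

theorem stmt14 (n : ℕ) (hn : 1 ≤ n) (δ β : ℝ) (hδ : 0 < δ) (hβ : β < (n : ℝ) + 4)
    (σ : ℝ) (bh : (Fin n → ℤ) → ℂ) (m : (Fin n → ℤ) → ℝ)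
    (hmneg : ∀ k : Fin n → ℤ, k ≠ 0 → m k < 0)
    (hb : Summable (fun k : Fin n → ℤ => (1 + knrm n k ^ 2) ^ σ * ‖bh k‖ ^ 2))
    (hbound₁ : β ≤ (n : ℝ) → ∃ C > (0 : ℝ), ∃ R : ℝ,
      ∀ k : Fin n → ℤ, R ≤ knrm n k → C ≤ |m k|)
    (hbound₂ : (n : ℝ) < β → ∃ C > (0 : ℝ), ∃ R : ℝ,
      ∀ k : Fin n → ℤ, R ≤ knrm n k → C * knrm n k ^ (β - n) ≤ |m k|)
    (t : ℝ) (ht : 0 ≤ t) :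
    Summable (fun k : Fin n → ℤ =>
      (1 + knrm n k ^ 2) ^ (σ + max 0 (β - n)) *
        ‖forcedCoef n m bh t k‖ ^ 2) := by
  set e := max 0 (β - (n : ℝ)) with he
  -- obtain a constant D and a radius R' ≥ 1 with the eventual pointwise bound
  obtain ⟨D, R', hR1, hbd⟩ : ∃ D : ℝ, ∃ R' : ℝ, 1 ≤ R' ∧
      ∀ k : Fin n → ℤ, R' ≤ knrm n k →
        (1 + knrm n k ^ 2) ^ (σ + e) * ‖forcedCoef n m bh t k‖ ^ 2
          ≤ D * ((1 + knrm n k ^ 2) ^ σ * ‖bh k‖ ^ 2) := by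
    have key : ∀ k : Fin n → ℤ, 1 ≤ knrm n k →
        ‖forcedCoef n m bh t k‖ ^ 2 ≤ 4 * ‖bh k‖ ^ 2 / (m k) ^ 2 := by
      intro k hk1
      have hk0 : k ≠ 0 := by
        intro h; rw [h, knrm_zero] at hk1; linarith
      have hm : m k < 0 := hmneg k hk0
      have hM : 0 < |m k| := abs_pos.2 (ne_of_lt hm)
      have h := forcedCoef_norm_le n m bh t k hk0
      have h2 : ‖forcedCoef n m bh t k‖ ^ 2 ≤ (2 * ‖bh k‖ / |m k|) ^ 2 :=
        pow_le_pow_left₀ (norm_nonneg _) h 2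
      calc ‖forcedCoef n m bh t k‖ ^ 2 ≤ (2 * ‖bh k‖ / |m k|) ^ 2 := h2
        _ = 4 * ‖bh k‖ ^ 2 / (m k) ^ 2 := by
            rw [div_pow, sq_abs]; ring
    rcases le_or_gt β (n : ℝ) with hle | hgt
    · obtain ⟨C, hC, R, hR⟩ := hbound₁ hle
      have he0 : e = 0 := by rw [he, max_eq_left (by linarith)]
      refine ⟨4 / C ^ 2, max R 1, le_max_right _ _, fun k hk => ?_⟩
      have hkR : R ≤ knrm n k := le_trans (le_max_left _ _) hk
      have hk1 : 1 ≤ knrm n k := le_trans (le_max_right _ _) hk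
      have hCm := hR k hkR
      have hk0 : k ≠ 0 := by
        intro h; rw [h, knrm_zero] at hk1; linarith
      have hmk2 : (0:ℝ) < (m k) ^ 2 := by
        have h := hmneg k hk0
        have := mul_pos_of_neg_of_neg h h
        nlinarith
      have hw : (0:ℝ) < 1 + knrm n k ^ 2 := by positivity
      have hm2 : C ^ 2 ≤ (m k) ^ 2 := by
        have := sq_abs (m k)
        nlinarith
      have hstep : ‖forcedCoef n m bh t k‖ ^ 2 ≤ 4 / C ^ 2 * ‖bh k‖ ^ 2 := by
        refine le_trans (key k hk1) ?_
        rw [div_mul_eq_mul_div]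
        gcongr
      calc (1 + knrm n k ^ 2) ^ (σ + e) * ‖forcedCoef n m bh t k‖ ^ 2
          = (1 + knrm n k ^ 2) ^ σ * ‖forcedCoef n m bh t k‖ ^ 2 := by
            rw [he0, add_zero]
        _ ≤ (1 + knrm n k ^ 2) ^ σ * (4 / C ^ 2 * ‖bh k‖ ^ 2) :=
            mul_le_mul_of_nonneg_left hstep (Real.rpow_nonneg (le_of_lt hw) _)
        _ = 4 / C ^ 2 * ((1 + knrm n k ^ 2) ^ σ * ‖bh k‖ ^ 2) := by ring
    · obtain ⟨C, hC, R, hR⟩ := hbound₂ hgt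
      have hee : e = β - (n : ℝ) := by rw [he, max_eq_right (by linarith)]
      have he0 : 0 ≤ e := le_max_left _ _
      refine ⟨2 ^ e * 4 / C ^ 2, max R 1, le_max_right _ _, fun k hk => ?_⟩
      have hkR : R ≤ knrm n k := le_trans (le_max_left _ _) hk
      have hk1 : 1 ≤ knrm n k := le_trans (le_max_right _ _) hk
      have hk0 : k ≠ 0 := by
        intro h; rw [h, knrm_zero] at hk1; linarith
      have hmk2 : (0:ℝ) < (m k) ^ 2 := by
        have h := hmneg k hk0
        have := mul_pos_of_neg_of_neg h h
        nlinarith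
      set x := knrm n k with hx
      have hx0 : (0:ℝ) < x := lt_of_lt_of_le one_pos hk1
      have hCm : C * x ^ e ≤ |m k| := by rw [hee]; exact hR k hkR
      have hP : (0:ℝ) < x ^ e := Real.rpow_pos_of_pos hx0 e
      have hw : (0:ℝ) < 1 + x ^ 2 := by positivity
      -- m k ^ 2 ≥ C^2 * (x^e)^2
      have hm2 : C ^ 2 * (x ^ e) ^ 2 ≤ (m k) ^ 2 := by
        have h1 : (C * x ^ e) ^ 2 ≤ |m k| ^ 2 :=
          pow_le_pow_left₀ (by positivity) hCm 2
        rw [sq_abs] at h1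
        nlinarith
      -- (1 + x^2)^e ≤ 2^e * (x^e)^2
      have hwe : (1 + x ^ 2) ^ e ≤ 2 ^ e * (x ^ e) ^ 2 := by
        have h1 : (1 + x ^ 2 : ℝ) ≤ 2 * x ^ 2 := by nlinarith
        have h2 : (1 + x ^ 2 : ℝ) ^ e ≤ (2 * x ^ 2) ^ e :=
          Real.rpow_le_rpow (le_of_lt hw) h1 he0
        have h3 : ((2 : ℝ) * x ^ 2) ^ e = 2 ^ e * (x ^ 2) ^ e :=
          Real.mul_rpow (by norm_num) (by positivity)
        have h4 : ((x : ℝ) ^ 2) ^ e = (x ^ e) ^ 2 := by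
          rw [← Real.rpow_natCast x 2, ← Real.rpow_mul (le_of_lt hx0),
            ← Real.rpow_natCast (x ^ e) 2, ← Real.rpow_mul (le_of_lt hx0)]
          ring_nf
        rw [h3, h4] at h2
        exact h2
      have hstep : (1 + x ^ 2) ^ e * ‖forcedCoef n m bh t k‖ ^ 2
          ≤ 2 ^ e * 4 / C ^ 2 * ‖bh k‖ ^ 2 := by
        have hk' := key k hk1
        have hfrac : (x ^ e) ^ 2 / (m k) ^ 2 ≤ 1 / C ^ 2 := by
          rw [div_le_div_iff₀ hmk2 (by positivity : (0:ℝ) < C ^ 2)]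
          nlinarith
        calc (1 + x ^ 2) ^ e * ‖forcedCoef n m bh t k‖ ^ 2
            ≤ (2 ^ e * (x ^ e) ^ 2) * (4 * ‖bh k‖ ^ 2 / (m k) ^ 2) := by
              apply mul_le_mul hwe hk' (by positivity)
              positivity
          _ = (2 ^ e * 4 * ‖bh k‖ ^ 2) * ((x ^ e) ^ 2 / (m k) ^ 2) := by ring
          _ ≤ (2 ^ e * 4 * ‖bh k‖ ^ 2) * (1 / C ^ 2) :=
              mul_le_mul_of_nonneg_left hfrac (by positivity)
          _ = 2 ^ e * 4 / C ^ 2 * ‖bh k‖ ^ 2 := by ring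
      calc (1 + x ^ 2) ^ (σ + e) * ‖forcedCoef n m bh t k‖ ^ 2
          = (1 + x ^ 2) ^ σ * ((1 + x ^ 2) ^ e * ‖forcedCoef n m bh t k‖ ^ 2) := by
            rw [Real.rpow_add hw]; ring
        _ ≤ (1 + x ^ 2) ^ σ * (2 ^ e * 4 / C ^ 2 * ‖bh k‖ ^ 2) :=
            mul_le_mul_of_nonneg_left hstep (Real.rpow_nonneg (le_of_lt hw) _)
        _ = 2 ^ e * 4 / C ^ 2 * ((1 + x ^ 2) ^ σ * ‖bh k‖ ^ 2) := by ring
  -- conclude by comparison with the summable majorant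
  apply Summable.of_norm_bounded_eventually
    (g := fun k : Fin n → ℤ => D * ((1 + knrm n k ^ 2) ^ σ * ‖bh k‖ ^ 2))
    (hb.mul_left D)
  rw [Filter.eventually_cofinite]
  apply (knrm_lt_finite n R').subset
  intro k hk
  simp only [Set.mem_setOf_eq] at hk ⊢
  by_contra h
  push_neg at h
  apply hk
  rw [Real.norm_of_nonneg (by positivity)]
  exact hbd k h
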